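/- arXiv:1110.0685 — 4 statements merged into one kernel-verified Lean document; each statement's English description precedes it below -/
import Mathlib

section
/- Let x̄ : Fin m × Fin T → ℝ≥0 satisfy Σ_{j,t} x̄(j,t) = 1, let α ∈ (0,1), and let τ^α = min{τ : Σ_j Σ_{u ≤ τ} x̄(j,u) ≥ α}. Define C̄ = Σ_j Σ_t τ_{t-1}·x̄(j,t), where 0 < τ_0 ≤ τ_1 ≤ ... is nondecreasing. Then C̄ ≥ (1-α)·τ_{τ^α - 1}. -/
/-!
The α-point argument is Markov's inequality for a monotone weight: the job's mass in the intervals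
`t ≥ τα` is at least `1 - α`, because by minimality of `τα` the mass strictly before it is at most `α`;
each unit of that mass contributes at least `τ τα` to the fractional completion time, and every other
contribution is nonnegative.
-/

open Finset

section

variable {ι : Type*} [Fintype ι] [LinearOrder ι]

theorem mul_sum_filter_le_le_sum_mul {g w : ι → ℝ} (hg : Monotone g) (hg₀ : ∀ t, 0 ≤ g t)
    (hw : ∀ t, 0 ≤ w t) (a : ι) :
    g a * ∑ t ∈ univ.filter (a ≤ ·), w t ≤ ∑ t, g t * w t :=
  calc g a * ∑ t ∈ univ.filter (a ≤ ·), w t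
      = ∑ t ∈ univ.filter (a ≤ ·), g a * w t := mul_sum _ _ _
    _ ≤ ∑ t ∈ univ.filter (a ≤ ·), g t * w t :=
      sum_le_sum fun t ht => mul_le_mul_of_nonneg_right (hg (mem_filter.1 ht).2) (hw t)
    _ ≤ ∑ t, g t * w t :=
      sum_le_sum_of_subset_of_nonneg (filter_subset _ _) fun t _ _ => mul_nonneg (hg₀ t) (hw t)

theorem sum_filter_lt_le_of_minimal {w : ι → ℝ} {α : ℝ} (hα : 0 ≤ α) {a : ι}
    (hmin : ∀ t, α ≤ ∑ u ∈ univ.filter (· ≤ t), w u → a ≤ t) :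
    ∑ u ∈ univ.filter (· < a), w u ≤ α := by
  by_contra! hlt
  have hne : (univ.filter (· < a)).Nonempty :=
    nonempty_of_sum_ne_zero (hα.trans_lt hlt).ne'
  set b := (univ.filter (· < a)).max' hne
  have hba : b < a := (mem_filter.1 (max'_mem _ hne)).2
  have hIio : univ.filter (· ≤ b) = univ.filter (· < a) := by
    ext u
    simp only [mem_filter, mem_univ, true_and]
    exact ⟨fun hub => hub.trans_lt hba, fun hua => le_max' _ u (by simpa using hua)⟩
  exact (hmin b (hIio ▸ hlt.le)).not_gt hba

theorem one_sub_mul_le_sum_mul {g w : ι → ℝ} (hg : Monotone g) (hg₀ : ∀ t, 0 ≤ g t)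
    (hw : ∀ t, 0 ≤ w t) (hw₁ : ∑ t, w t = 1) {α : ℝ} (hα : 0 ≤ α) {a : ι}
    (hmin : ∀ t, α ≤ ∑ u ∈ univ.filter (· ≤ t), w u → a ≤ t) :
    (1 - α) * g a ≤ ∑ t, g t * w t := by
  have hsplit : ∑ t ∈ univ.filter (a ≤ ·), w t + ∑ t ∈ univ.filter (· < a), w t = 1 := by
    rw [← hw₁, ← sum_filter_add_sum_filter_not univ (a ≤ ·)]
    simp only [not_le]
  have hmass : 1 - α ≤ ∑ t ∈ univ.filter (a ≤ ·), w t := by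
    linarith [sum_filter_lt_le_of_minimal hα hmin]
  calc (1 - α) * g a ≤ g a * ∑ t ∈ univ.filter (a ≤ ·), w t := by
        rw [mul_comm]; exact mul_le_mul_of_nonneg_left hmass (hg₀ a)
    _ ≤ ∑ t, g t * w t := mul_sum_filter_le_le_sum_mul hg hg₀ hw a

end

/-- Interval `t : Fin T` has lower endpoint `τ t.val`, the paper's `τ_{t-1}` in `1`-based indexing. -/
theorem stmt_4_general (m T : ℕ) (x : Fin m × Fin T → ℝ)
    (hx : ∀ p, 0 ≤ x p)
    (hsum : ∑ j : Fin m, ∑ t : Fin T, x (j, t) = 1)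
    (α : ℝ) (hα : α ∈ Set.Ioo (0 : ℝ) 1)
    (τ : ℕ → ℝ) (hτ0 : 0 < τ 0) (hτmono : Monotone τ)
    (τα : Fin T)
    (hταmin : ∀ t : Fin T,
      α ≤ ∑ j : Fin m, ∑ u ∈ Finset.univ.filter (fun u : Fin T => u ≤ t), x (j, u) → τα ≤ t) :
    (1 - α) * τ (τα : ℕ) ≤ ∑ j : Fin m, ∑ t : Fin T, τ (t : ℕ) * x (j, t) := by
  rw [sum_comm] at hsum ⊢
  simp only [← mul_sum]
  refine one_sub_mul_le_sum_mul (w := fun t => ∑ j, x (j, t)) (hτmono.comp Fin.val_strictMono.monotone)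
    (fun t => hτ0.le.trans (hτmono t.val.zero_le)) (fun t => sum_nonneg fun j _ => hx (j, t)) hsum
    hα.1.le fun t ht => hταmin t ?_
  rwa [sum_comm]

/-- The α-point lower bound on the fractional completion time: at least a
`(1-α)` fraction of the job's mass lies in intervals with lower endpoint at
least `τ (τα)`.  (Here interval `t : Fin T` has lower endpoint `τ t.val`,
matching the paper's `τ_{t-1}` with `1`-based indexing.) -/
theorem stmt_4 (m T : ℕ) (x : Fin m × Fin T → ℝ)
    (hx : ∀ p, 0 ≤ x p)
    (hsum : ∑ j : Fin m, ∑ t : Fin T, x (j, t) = 1)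
    (α : ℝ) (hα : α ∈ Set.Ioo (0 : ℝ) 1)
    (τ : ℕ → ℝ) (hτ0 : 0 < τ 0) (hτmono : Monotone τ)
    (τα : Fin T)
    (hτα : α ≤ ∑ j : Fin m, ∑ u ∈ Finset.univ.filter (fun u : Fin T => u ≤ τα), x (j, u))
    (hταmin : ∀ t : Fin T,
      α ≤ ∑ j : Fin m, ∑ u ∈ Finset.univ.filter (fun u : Fin T => u ≤ t), x (j, u) → τα ≤ t) :
    (1 - α) * τ (τα : ℕ) ≤ ∑ j : Fin m, ∑ t : Fin T, τ (t : ℕ) * x (j, t) :=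
  stmt_4_general m T x hx hsum α hα τ hτ0 hτmono τα hταmin
end

section
/- Consider n jobs on one machine with no release dates or precedence constraints, processing requirements ρ_i > 0, weights w_i > 0, energy coefficients v_i > 0, and exponent β = k ≥ 2. Define ξ_i = ρ_i·v_i^{1/k}, q = (k-1)/k, and K = k/(k-1)^{(k-1)/k}. The total cost after optimizing speeds for a fixed order π is F(π) = Σ_{i=1}^n K·ξ_{π(i)}·(Σ_{j=i}^n w_{π(j)})^q. If all weights are equal (w_i = w for all i), then any order π minimizing F must satisfy ξ_{π(i)} ≤ ξ_{π(i+1)} for all i; equivalently, swapping adjacent jobs k, k+1 with ξ_{π(k)} > ξ_{π(k+1)} strictly decreases F. -/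
/-- With equal weights, any order minimizing the speed-optimized total cost
`F(π) = Σ_i K·ξ_{π(i)}·(Σ_{j≥i} w_{π(j)})^q` processes jobs in nondecreasing
order of `ξ_i = ρ_i·v_i^(1/k)`. -/
theorem stmt_12 (n : ℕ) (k : ℝ) (hk : 2 ≤ k)
    (ρ v w : Fin n → ℝ)
    (hρ : ∀ i, 0 < ρ i) (hv : ∀ i, 0 < v i) (hw : ∀ i, 0 < w i)
    (wconst : ℝ) (hwc : ∀ i, w i = wconst)
    (ξ : Fin n → ℝ) (hξ : ∀ i, ξ i = ρ i * v i ^ ((1 : ℝ) / k))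
    (q K : ℝ) (hq : q = (k - 1) / k) (hK : K = k / (k - 1) ^ ((k - 1) / k))
    (F : Equiv.Perm (Fin n) → ℝ)
    (hF : ∀ π : Equiv.Perm (Fin n),
      F π = ∑ i : Fin n,
        K * ξ (π i) * (∑ j ∈ Finset.univ.filter (fun j : Fin n => i ≤ j), w (π j)) ^ q)
    (π : Equiv.Perm (Fin n)) (hmin : ∀ π' : Equiv.Perm (Fin n), F π ≤ F π') :
    ∀ i : Fin n, ∀ h : (i : ℕ) + 1 < n, ξ (π i) ≤ ξ (π ⟨(i : ℕ) + 1, h⟩) := by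
  intro i hlt
  by_contra hcon
  push_neg at hcon
  set i' : Fin n := ⟨(i : ℕ) + 1, hlt⟩ with hi'
  have hne : i ≠ i' := by
    intro h
    have := congrArg Fin.val h
    simp [hi'] at this
  have hwpos : 0 < wconst := (hwc i) ▸ hw i
  have hKpos : 0 < K := by
    rw [hK]
    exact div_pos (by linarith) (Real.rpow_pos_of_pos (by linarith) _)
  have hqpos : 0 < q := by
    rw [hq]; exact div_pos (by linarith) (by linarith)
  set c : Fin n → ℝ := fun j => (((n - (j : ℕ) : ℕ) : ℝ) * wconst) ^ q with hc
  have hcard : ∀ j : Fin n,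
      (Finset.univ.filter (fun j' : Fin n => j ≤ j')).card = n - (j : ℕ) := by
    intro j
    have : Finset.univ.filter (fun j' : Fin n => j ≤ j') = Finset.Ici j := by
      ext x; simp
    rw [this, Fin.card_Ici]
  have hF' : ∀ τ : Equiv.Perm (Fin n), F τ = ∑ j : Fin n, K * ξ (τ j) * c j := by
    intro τ
    rw [hF]
    refine Finset.sum_congr rfl fun j _ => ?_
    have hsum : (∑ j' ∈ Finset.univ.filter (fun j' : Fin n => j ≤ j'), w (τ j'))
        = ((n - (j : ℕ) : ℕ) : ℝ) * wconst := by
      rw [Finset.sum_congr rfl (fun x _ => hwc (τ x)), Finset.sum_const, hcard,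
        nsmul_eq_mul]
    rw [hsum, hc]
  set σ : Equiv.Perm (Fin n) := Equiv.swap i i' with hσ
  have hσi : σ i = i' := Equiv.swap_apply_left i i'
  have hσi' : σ i' = i := Equiv.swap_apply_right i i'
  have hci : c i' < c i := by
    rw [hc]
    have h1 : n - ((i' : ℕ)) < n - (i : ℕ) := by
      have : (i : ℕ) < n := i.2
      simp only [hi']
      omega
    refine Real.rpow_lt_rpow (mul_nonneg (Nat.cast_nonneg _) hwpos.le) ?_ hqpos
    exact mul_lt_mul_of_pos_right (Nat.cast_lt.2 h1) hwpos
  have hdiff : F π - F (π * σ) =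
      ∑ j : Fin n, (K * ξ (π j) * c j - K * ξ (π (σ j)) * c j) := by
    rw [hF' π, hF' (π * σ), ← Finset.sum_sub_distrib]
    refine Finset.sum_congr rfl fun j _ => ?_
    rw [Equiv.Perm.mul_apply]
  have hzero : ∀ j ∈ (Finset.univ : Finset (Fin n)),
      j ∉ ({i, i'} : Finset (Fin n)) →
      (K * ξ (π j) * c j - K * ξ (π (σ j)) * c j) = 0 := by
    intro j _ hj
    simp only [Finset.mem_insert, Finset.mem_singleton, not_or] at hj
    rw [hσ, Equiv.swap_apply_of_ne_of_ne hj.1 hj.2, sub_self]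
  have hpair : ∑ j : Fin n, (K * ξ (π j) * c j - K * ξ (π (σ j)) * c j)
      = ∑ j ∈ ({i, i'} : Finset (Fin n)), (K * ξ (π j) * c j - K * ξ (π (σ j)) * c j) :=
    (Finset.sum_subset (Finset.subset_univ _) hzero).symm
  have hkey : 0 < F π - F (π * σ) := by
    rw [hdiff, hpair, Finset.sum_pair hne, hσi, hσi']
    nlinarith [mul_pos hKpos (mul_pos (sub_pos.2 hcon) (sub_pos.2 hci))]
  linarith [hmin (π * σ)]
end

section
/- Let x̄ : Fin n × Fin m × Fin T → ℝ≥0 satisfy the capacity constraints: for every t, Σ_i Σ_j Σ_{u ≤ t} (ρ_i/σ_j)·x̄(i,j,u) ≤ τ_t. For job i with α-interval τ_i^α, and truncated variables x̃ satisfying 0 ≤ x̃(i,j,u) ≤ x̄(i,j,u), x̃(i,j,u) = 0 for u > τ_i^α, and Σ_j Σ_{u ≤ τ_i^α} x̃(i,j,u) = α, define the α-speed s_i^α by ρ_i/s_i^α = (1/α)·Σ_j Σ_{u ≤ τ_i^α} (ρ_i/σ_j)·x̃(i,j,u). Then, assuming jobs are indexed so that τ_1^α ≤ ... ≤ τ_n^α,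 the completion time C_i^α = Σ_{j=1}^{i} ρ_j/s_j^α (no idle time) satisfies C_i^α ≤ (1/α)·τ_{τ_i^α}. -/
/-- Completion-time bound via α-speeds (no release dates): with jobs ordered by
their α-intervals, the sequential completion time of job `i` at the α-speeds is
at most `(1/α)·τ_{τ_i^α}`. -/
theorem stmt_14 (n m T : ℕ)
    (ρ : Fin n → ℝ) (σ : Fin m → ℝ) (τ : Fin T → ℝ)
    (hρ : ∀ i, 0 < ρ i) (hσ : ∀ j, 0 < σ j)
    (xbar xtilde : Fin n → Fin m → Fin T → ℝ)
    (hxbar : ∀ i j t, 0 ≤ xbar i j t)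
    (α : ℝ) (hα : α ∈ Set.Ioo (0 : ℝ) 1)
    (hcap : ∀ t : Fin T,
      ∑ i : Fin n, ∑ j : Fin m,
        ∑ u ∈ Finset.univ.filter (fun u : Fin T => u ≤ t), (ρ i / σ j) * xbar i j u ≤ τ t)
    (τα : Fin n → Fin T)
    (hsorted : ∀ i i' : Fin n, i ≤ i' → τα i ≤ τα i')
    (hxt_nonneg : ∀ i j t, 0 ≤ xtilde i j t)
    (hxt_le : ∀ i j t, xtilde i j t ≤ xbar i j t)
    (hxt_zero : ∀ i j t, τα i < t → xtilde i j t = 0)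
    (hxt_sum : ∀ i : Fin n,
      ∑ j : Fin m, ∑ u ∈ Finset.univ.filter (fun u : Fin T => u ≤ τα i), xtilde i j u = α)
    (sα : Fin n → ℝ) (hsα : ∀ i, 0 < sα i)
    (hspeed : ∀ i : Fin n, ρ i / sα i =
      (1 / α) * ∑ j : Fin m,
        ∑ u ∈ Finset.univ.filter (fun u : Fin T => u ≤ τα i), (ρ i / σ j) * xtilde i j u)
    (C : Fin n → ℝ)
    (hC : ∀ i : Fin n, C i = ∑ j ∈ Finset.univ.filter (fun j : Fin n => j ≤ i), ρ j / sα j) :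
    ∀ i : Fin n, C i ≤ (1 / α) * τ (τα i) := by
  intro i
  have hαpos := hα.1
  have key : ∀ k : Fin n, k ≤ i →
      (∑ j : Fin m, ∑ u ∈ Finset.univ.filter (fun u : Fin T => u ≤ τα k),
        (ρ k / σ j) * xtilde k j u)
      ≤ ∑ j : Fin m, ∑ u ∈ Finset.univ.filter (fun u : Fin T => u ≤ τα i),
        (ρ k / σ j) * xbar k j u := by
    intro k hk
    apply Finset.sum_le_sum
    intro j _
    have hsub : (Finset.univ.filter (fun u : Fin T => u ≤ τα k)) ⊆
        Finset.univ.filter (fun u : Fin T => u ≤ τα i) := by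
      intro u hu
      simp only [Finset.mem_filter, Finset.mem_univ, true_and] at *
      exact le_trans hu (hsorted k i hk)
    calc ∑ u ∈ Finset.univ.filter (fun u : Fin T => u ≤ τα k), (ρ k / σ j) * xtilde k j u
        ≤ ∑ u ∈ Finset.univ.filter (fun u : Fin T => u ≤ τα k),
          (ρ k / σ j) * xbar k j u := Finset.sum_le_sum (fun u _ =>
            mul_le_mul_of_nonneg_left (hxt_le k j u)
              (le_of_lt (div_pos (hρ k) (hσ j))))
      _ ≤ _ := Finset.sum_le_sum_of_subset_of_nonneg hsub (fun u _ _ =>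
            mul_nonneg (le_of_lt (div_pos (hρ k) (hσ j))) (hxbar k j u))
  have hinv : 0 ≤ 1 / α := by positivity
  rw [hC]
  have step : ∑ j ∈ Finset.univ.filter (fun j : Fin n => j ≤ i), ρ j / sα j
      ≤ (1/α) * ∑ k : Fin n, ∑ j : Fin m,
        ∑ u ∈ Finset.univ.filter (fun u : Fin T => u ≤ τα i), (ρ k / σ j) * xbar k j u := by
    rw [Finset.mul_sum]
    calc ∑ j ∈ Finset.univ.filter (fun j : Fin n => j ≤ i), ρ j / sα j
        ≤ ∑ k ∈ Finset.univ.filter (fun j : Fin n => j ≤ i), (1/α) *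
            (∑ j : Fin m, ∑ u ∈ Finset.univ.filter (fun u : Fin T => u ≤ τα i),
              (ρ k / σ j) * xbar k j u) := by
          apply Finset.sum_le_sum
          intro k hk
          rw [hspeed k]
          exact mul_le_mul_of_nonneg_left (key k (Finset.mem_filter.mp hk).2) hinv
      _ ≤ _ := Finset.sum_le_sum_of_subset_of_nonneg (Finset.filter_subset _ _)
          (fun k _ _ => mul_nonneg hinv (Finset.sum_nonneg (fun j _ =>
            Finset.sum_nonneg (fun u _ =>
              mul_nonneg (le_of_lt (div_pos (hρ k) (hσ j))) (hxbar k j u)))))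
  exact step.trans (mul_le_mul_of_nonneg_left (hcap (τα i)) hinv)
end

section
/- Under the setting of the previous statement but with release dates r_i ≥ 0, suppose additionally that every job j with positive fractional mass up through interval τ (i.e., Σ_l Σ_{u ≤ τ} x̄(j,l,u) > 0) satisfies r_j ≤ τ_τ. Then the completion time of job i in the sequential schedule respecting the α-interval order satisfies C_i^α ≤ max_{j : τ_j^α ≤ τ_i^α} r_j + Σ_{j : τ_j^α ≤ τ_i^α} ρ_j/s_j^α ≤ ((1+α)/α)·τ_{τ_i^α}. -/
/-- Completion-time bound via α-speeds with release dates: the sequential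
completion time of job `i` (jobs ordered by α-intervals, start delayed to the
release date) is bounded by the largest relevant release date plus the total
α-speed processing time, which is at most `((1+α)/α)·τ_{τ_i^α}`. -/
theorem stmt_15 (n m T : ℕ)
    (ρ r : Fin n → ℝ) (σ : Fin m → ℝ) (τ : Fin T → ℝ)
    (hρ : ∀ i, 0 < ρ i) (hr : ∀ i, 0 ≤ r i) (hσ : ∀ j, 0 < σ j)
    (xbar xtilde : Fin n → Fin m → Fin T → ℝ)
    (hxbar : ∀ i j t, 0 ≤ xbar i j t)
    (α : ℝ) (hα : α ∈ Set.Ioo (0 : ℝ) 1)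
    (hcap : ∀ t : Fin T,
      ∑ i : Fin n, ∑ j : Fin m,
        ∑ u ∈ Finset.univ.filter (fun u : Fin T => u ≤ t), (ρ i / σ j) * xbar i j u ≤ τ t)
    (hrel : ∀ j : Fin n, ∀ t : Fin T,
      0 < ∑ l : Fin m, ∑ u ∈ Finset.univ.filter (fun u : Fin T => u ≤ t), xbar j l u →
        r j ≤ τ t)
    (τα : Fin n → Fin T)
    (hsorted : ∀ i i' : Fin n, i ≤ i' → τα i ≤ τα i')
    (hxt_nonneg : ∀ i j t, 0 ≤ xtilde i j t)
    (hxt_le : ∀ i j t, xtilde i j t ≤ xbar i j t)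
    (hxt_zero : ∀ i j t, τα i < t → xtilde i j t = 0)
    (hxt_sum : ∀ i : Fin n,
      ∑ j : Fin m, ∑ u ∈ Finset.univ.filter (fun u : Fin T => u ≤ τα i), xtilde i j u = α)
    (sα : Fin n → ℝ) (hsα : ∀ i, 0 < sα i)
    (hspeed : ∀ i : Fin n, ρ i / sα i =
      (1 / α) * ∑ j : Fin m,
        ∑ u ∈ Finset.univ.filter (fun u : Fin T => u ≤ τα i), (ρ i / σ j) * xtilde i j u)
    (C : ℕ → ℝ) (hC0 : C 0 = 0)
    (hC : ∀ i : Fin n, C ((i : ℕ) + 1) = max (r i) (C (i : ℕ)) + ρ i / sα i) :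
    ∀ i : Fin n,
      C ((i : ℕ) + 1) ≤
          sSup {x : ℝ | ∃ j : Fin n, τα j ≤ τα i ∧ x = r j} +
            ∑ j ∈ Finset.univ.filter (fun j : Fin n => τα j ≤ τα i), ρ j / sα j ∧
        sSup {x : ℝ | ∃ j : Fin n, τα j ≤ τα i ∧ x = r j} +
            ∑ j ∈ Finset.univ.filter (fun j : Fin n => τα j ≤ τα i), ρ j / sα j ≤
          ((1 + α) / α) * τ (τα i) := by
  obtain ⟨hα0, hα1⟩ := hα
  -- release dates of relevant jobs are bounded by τ (τα i)
  have hmass : ∀ j i : Fin n, τα j ≤ τα i → r j ≤ τ (τα i) := by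
    intro j i hji
    apply hrel j (τα i)
    have h1 : α ≤ ∑ l : Fin m,
        ∑ u ∈ Finset.univ.filter (fun u : Fin T => u ≤ τα i), xbar j l u := by
      rw [← hxt_sum j]
      apply Finset.sum_le_sum
      intro l _
      calc ∑ u ∈ Finset.univ.filter (fun u : Fin T => u ≤ τα j), xtilde j l u
          ≤ ∑ u ∈ Finset.univ.filter (fun u : Fin T => u ≤ τα j), xbar j l u :=
            Finset.sum_le_sum (fun u _ => hxt_le j l u)
        _ ≤ ∑ u ∈ Finset.univ.filter (fun u : Fin T => u ≤ τα i), xbar j l u := by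
            apply Finset.sum_le_sum_of_subset_of_nonneg
            · intro u hu
              simp only [Finset.mem_filter, Finset.mem_univ, true_and] at hu ⊢
              exact le_trans hu hji
            · intro u _ _; exact hxbar j l u
    linarith
  have hne : ∀ i : Fin n, ({x : ℝ | ∃ j : Fin n, τα j ≤ τα i ∧ x = r j}).Nonempty :=
    fun i => ⟨r i, i, le_rfl, rfl⟩
  have hbdd : ∀ i : Fin n, BddAbove {x : ℝ | ∃ j : Fin n, τα j ≤ τα i ∧ x = r j} := by
    intro i
    refine ⟨τ (τα i), ?_⟩
    rintro x ⟨j, hj, rfl⟩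
    exact hmass j i hj
  have hMle : ∀ i : Fin n, sSup {x : ℝ | ∃ j : Fin n, τα j ≤ τα i ∧ x = r j} ≤ τ (τα i) := by
    intro i
    apply csSup_le (hne i)
    rintro x ⟨j, hj, rfl⟩
    exact hmass j i hj
  have hriM : ∀ i : Fin n, r i ≤ sSup {x : ℝ | ∃ j : Fin n, τα j ≤ τα i ∧ x = r j} :=
    fun i => le_csSup (hbdd i) ⟨i, le_rfl, rfl⟩
  have hMnn : ∀ i : Fin n, (0:ℝ) ≤ sSup {x : ℝ | ∃ j : Fin n, τα j ≤ τα i ∧ x = r j} :=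
    fun i => le_trans (hr i) (hriM i)
  have hMmono : ∀ i i' : Fin n, τα i' ≤ τα i →
      sSup {x : ℝ | ∃ j : Fin n, τα j ≤ τα i' ∧ x = r j} ≤
        sSup {x : ℝ | ∃ j : Fin n, τα j ≤ τα i ∧ x = r j} := by
    intro i i' h
    apply csSup_le_csSup (hbdd i) (hne i')
    rintro x ⟨j, hj, rfl⟩
    exact ⟨j, le_trans hj h, rfl⟩
  have hpos : ∀ j : Fin n, 0 < ρ j / sα j := fun j => div_pos (hρ j) (hsα j)
  -- the key inductive bound with sums over index prefixes
  have key : ∀ k : ℕ, ∀ hk : k < n,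
      C (k + 1) ≤ sSup {x : ℝ | ∃ j : Fin n, τα j ≤ τα ⟨k, hk⟩ ∧ x = r j} +
        ∑ j ∈ Finset.univ.filter (fun j : Fin n => j ≤ (⟨k, hk⟩ : Fin n)), ρ j / sα j := by
    intro k
    induction k with
    | zero =>
      intro hk
      have h := hC ⟨0, hk⟩
      simp only [Fin.val_mk] at h
      rw [h, hC0, max_eq_left (hr ⟨0, hk⟩)]
      have h1 : ρ (⟨0, hk⟩ : Fin n) / sα ⟨0, hk⟩ ≤
          ∑ j ∈ Finset.univ.filter (fun j : Fin n => j ≤ (⟨0, hk⟩ : Fin n)), ρ j / sα j := by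
        apply Finset.single_le_sum (f := fun j : Fin n => ρ j / sα j)
        · intro j _; exact (hpos j).le
        · simp
      have h2 := hriM ⟨0, hk⟩
      linarith
    | succ k ih =>
      intro hk
      have hk' : k < n := Nat.lt_of_succ_lt hk
      set i : Fin n := ⟨k + 1, hk⟩ with hi
      set i' : Fin n := ⟨k, hk'⟩ with hi'
      have hii' : i' ≤ i := by simp [hi, hi', Fin.le_def]
      have hττ : τα i' ≤ τα i := hsorted i' i hii'
      have hsplit : Finset.univ.filter (fun j : Fin n => j ≤ i) =
          insert i (Finset.univ.filter (fun j : Fin n => j ≤ i')) := by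
        ext j
        simp only [Finset.mem_filter, Finset.mem_univ, true_and, Finset.mem_insert,
          Fin.le_def, Fin.ext_iff, hi, hi']
        omega
      have hnotmem : i ∉ Finset.univ.filter (fun j : Fin n => j ≤ i') := by
        simp [hi, hi', Fin.le_def]
      have hsum : ∑ j ∈ Finset.univ.filter (fun j : Fin n => j ≤ i), ρ j / sα j =
          ρ i / sα i + ∑ j ∈ Finset.univ.filter (fun j : Fin n => j ≤ i'), ρ j / sα j := by
        rw [hsplit, Finset.sum_insert hnotmem]
      have hCi := hC i
      rw [hCi, hsum]
      have hSnn : 0 ≤ ∑ j ∈ Finset.univ.filter (fun j : Fin n => j ≤ i'), ρ j / sα j :=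
        Finset.sum_nonneg (fun j _ => (hpos j).le)
      have hmaxle : max (r i) (C (k + 1)) ≤
          sSup {x : ℝ | ∃ j : Fin n, τα j ≤ τα i ∧ x = r j} +
            ∑ j ∈ Finset.univ.filter (fun j : Fin n => j ≤ i'), ρ j / sα j := by
        apply max_le
        · have := hriM i; linarith
        · have h1 := ih hk'
          have h2 := hMmono i i' hττ
          linarith
      linarith
  intro i
  -- bound the sum of speeds by (1/α) * τ (τα i)
  have hSle : ∑ j ∈ Finset.univ.filter (fun j : Fin n => τα j ≤ τα i), ρ j / sα j ≤
      (1 / α) * τ (τα i) := by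
    have hterm : ∀ j : Fin n, τα j ≤ τα i → ρ j / sα j ≤
        (1 / α) * ∑ l : Fin m,
          ∑ u ∈ Finset.univ.filter (fun u : Fin T => u ≤ τα i), (ρ j / σ l) * xtilde j l u := by
      intro j hj
      rw [hspeed j]
      apply mul_le_mul_of_nonneg_left _ (by positivity)
      apply Finset.sum_le_sum
      intro l _
      apply Finset.sum_le_sum_of_subset_of_nonneg
      · intro u hu
        simp only [Finset.mem_filter, Finset.mem_univ, true_and] at hu ⊢
        exact le_trans hu hj
      · intro u _ _
        exact mul_nonneg (div_nonneg (hρ j).le (hσ l).le) (hxt_nonneg j l u)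
    calc ∑ j ∈ Finset.univ.filter (fun j : Fin n => τα j ≤ τα i), ρ j / sα j
        ≤ ∑ j ∈ Finset.univ.filter (fun j : Fin n => τα j ≤ τα i),
            (1 / α) * ∑ l : Fin m,
              ∑ u ∈ Finset.univ.filter (fun u : Fin T => u ≤ τα i),
                (ρ j / σ l) * xtilde j l u := by
          apply Finset.sum_le_sum
          intro j hj
          simp only [Finset.mem_filter, Finset.mem_univ, true_and] at hj
          exact hterm j hj
      _ ≤ ∑ j : Fin n, (1 / α) * ∑ l : Fin m,
            ∑ u ∈ Finset.univ.filter (fun u : Fin T => u ≤ τα i),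
              (ρ j / σ l) * xtilde j l u := by
          apply Finset.sum_le_sum_of_subset_of_nonneg (Finset.filter_subset _ _)
          intro j _ _
          apply mul_nonneg (by positivity)
          apply Finset.sum_nonneg; intro l _
          apply Finset.sum_nonneg; intro u _
          exact mul_nonneg (div_nonneg (hρ j).le (hσ l).le) (hxt_nonneg j l u)
      _ = (1 / α) * ∑ j : Fin n, ∑ l : Fin m,
            ∑ u ∈ Finset.univ.filter (fun u : Fin T => u ≤ τα i),
              (ρ j / σ l) * xtilde j l u := by rw [Finset.mul_sum]
      _ ≤ (1 / α) * ∑ j : Fin n, ∑ l : Fin m,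
            ∑ u ∈ Finset.univ.filter (fun u : Fin T => u ≤ τα i),
              (ρ j / σ l) * xbar j l u := by
          apply mul_le_mul_of_nonneg_left _ (by positivity)
          apply Finset.sum_le_sum; intro j _
          apply Finset.sum_le_sum; intro l _
          apply Finset.sum_le_sum; intro u _
          exact mul_le_mul_of_nonneg_left (hxt_le j l u)
            (div_nonneg (hρ j).le (hσ l).le)
      _ ≤ (1 / α) * τ (τα i) :=
          mul_le_mul_of_nonneg_left (hcap (τα i)) (by positivity)
  have hτnn : 0 ≤ τ (τα i) := le_trans (hr i) (hmass i i le_rfl)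
  constructor
  · have h1 := key i.val i.isLt
    have h2 : (⟨i.val, i.isLt⟩ : Fin n) = i := rfl
    rw [h2] at h1
    refine le_trans h1 ?_
    have h3 : ∑ j ∈ Finset.univ.filter (fun j : Fin n => j ≤ i), ρ j / sα j ≤
        ∑ j ∈ Finset.univ.filter (fun j : Fin n => τα j ≤ τα i), ρ j / sα j := by
      apply Finset.sum_le_sum_of_subset_of_nonneg
      · intro j hj
        simp only [Finset.mem_filter, Finset.mem_univ, true_and] at hj ⊢
        exact hsorted j i hj
      · intro j _ _; exact (hpos j).le
    linarith
  · have h1 := hMle i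
    have heq : ((1 + α) / α) * τ (τα i) = τ (τα i) + (1 / α) * τ (τα i) := by
      field_simp; ring
    rw [heq]
    linarith
end
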